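/- For jointly distributed random variables A, B, C forming a Markov chain A - B - C (i.e., A and C are conditionally independent given B), the Bayesian risk satisfies R_ℓ(C|A) ≥ R_ℓ(C|B), where R_ℓ(C|A) := inf over measurable decision rules ψ of E[ℓ(C, ψ(A))]. -/
import Mathlib


open scoped BigOperators

/-- Distribution (pushforward) of a random variable `X` under weights `p`. -/
noncomputable def distOf {Ω α : Type*} [Fintype Ω] [DecidableEq α]
    (p : Ω → ℝ) (X : Ω → α) (a : α) : ℝ :=
  ∑ ω, if X ω = a then p ω else 0

/-- Shannon entropy of a random variable. -/
noncomputable def entOf {Ω α : Type*} [Fintype Ω] [Fintype α] [DecidableEq α]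
    (p : Ω → ℝ) (X : Ω → α) : ℝ :=
  -∑ a, distOf p X a * Real.log (distOf p X a)

/-- Conditional entropy H(Y|X). -/
noncomputable def condEntOf {Ω α β : Type*} [Fintype Ω] [Fintype α] [Fintype β]
    [DecidableEq α] [DecidableEq β] (p : Ω → ℝ) (Y : Ω → β) (X : Ω → α) : ℝ :=
  entOf p (fun ω => (Y ω, X ω)) - entOf p X

/-- Mutual information I(A;B). -/
noncomputable def miOf {Ω α β : Type*} [Fintype Ω] [Fintype α] [Fintype β]
    [DecidableEq α] [DecidableEq β] (p : Ω → ℝ) (A : Ω → α) (B : Ω → β) : ℝ :=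
  entOf p A + entOf p B - entOf p (fun ω => (A ω, B ω))

/-- Conditional mutual information I(A;B|C). -/
noncomputable def cmiOf {Ω α β γ : Type*} [Fintype Ω] [Fintype α] [Fintype β] [Fintype γ]
    [DecidableEq α] [DecidableEq β] [DecidableEq γ]
    (p : Ω → ℝ) (A : Ω → α) (B : Ω → β) (C : Ω → γ) : ℝ :=
  condEntOf p A C - condEntOf p A (fun ω => (B ω, C ω))

/-- `p` is a probability mass function on the finite sample space. -/
def IsPMF {Ω : Type*} [Fintype Ω] (p : Ω → ℝ) : Prop :=
  (∀ ω, 0 ≤ p ω) ∧ ∑ ω, p ω = 1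

/-- A and B are conditionally independent given C. -/
def CondIndep {Ω α β γ : Type*} [Fintype Ω] [DecidableEq α] [DecidableEq β] [DecidableEq γ]
    (p : Ω → ℝ) (A : Ω → α) (B : Ω → β) (C : Ω → γ) : Prop :=
  ∀ a b c, distOf p (fun ω => (A ω, B ω, C ω)) (a, b, c) * distOf p C c =
    distOf p (fun ω => (A ω, C ω)) (a, c) * distOf p (fun ω => (B ω, C ω)) (b, c)

/-- Equality in distribution. -/
def IdentDist {Ω α : Type*} [Fintype Ω] [DecidableEq α]
    (p : Ω → ℝ) (X Y : Ω → α) : Prop := ∀ a, distOf p X a = distOf p Y a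

/-- Bayesian risk: infimum over measurable (automatic here) decision rules of the
expected loss. -/
noncomputable def risk {Ω α 𝒞 𝒜 : Type*} [Fintype Ω]
    (p : Ω → ℝ) (ℓ : 𝒞 → 𝒜 → ℝ) (C : Ω → 𝒞) (A : Ω → α) : ℝ :=
  ⨅ ψ : α → 𝒜, ∑ ω, p ω * ℓ (C ω) (ψ (A ω))


lemma distOf_nonneg' {Ω α : Type*} [Fintype Ω] [DecidableEq α]
    {p : Ω → ℝ} (hp : ∀ ω, 0 ≤ p ω) (X : Ω → α) (a : α) : 0 ≤ distOf p X a :=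
  Finset.sum_nonneg fun ω _ => by split <;> simp [hp ω]

lemma sum_distOf_mul' {Ω γ : Type*} [Fintype Ω] [Fintype γ] [DecidableEq γ]
    (p : Ω → ℝ) (X : Ω → γ) (f : γ → ℝ) :
    ∑ x, distOf p X x * f x = ∑ ω, p ω * f (X ω) := by
  simp only [distOf, Finset.sum_mul, ite_mul, zero_mul]
  rw [Finset.sum_comm]
  simp [Finset.sum_ite_eq]

lemma sum_comm3x {a' b' g' : Type*} [Fintype a'] [Fintype b'] [Fintype g']
    (f : a' -> g' -> b' -> Real) :
    ∑ a, ∑ c, ∑ b, f a c b = ∑ b, ∑ a, ∑ c, f a c b :=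
  (Finset.sum_congr rfl fun _ _ => Finset.sum_comm).trans Finset.sum_comm

lemma distOf_marg' {Ω α β : Type*} [Fintype Ω] [Fintype α] [DecidableEq α] [DecidableEq β]
    (p : Ω → ℝ) (X : Ω → α) (Y : Ω → β) (b : β) :
    ∑ a, distOf p (fun ω => (X ω, Y ω)) (a, b) = distOf p Y b := by
  simp only [distOf]
  rw [Finset.sum_comm]
  refine Finset.sum_congr rfl fun ω _ => ?_
  simp [Prod.ext_iff, ite_and, Finset.sum_ite_eq]

/-- data processing inequality for the Bayesian risk:
if A - B - C is a Markov chain (A ⊥ C | B), then R_ℓ(C|A) ≥ R_ℓ(C|B). -/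
theorem bayes_risk_data_processing
    {Ω α β 𝒞 𝒜 : Type*} [Fintype Ω] [Fintype α] [Fintype β] [Fintype 𝒞] [Fintype 𝒜]
    [DecidableEq α] [DecidableEq β] [DecidableEq 𝒞] [Nonempty 𝒜]
    (p : Ω → ℝ) (hp : IsPMF p)
    (A : Ω → α) (B : Ω → β) (C : Ω → 𝒞) (ℓ : 𝒞 → 𝒜 → ℝ)
    (hMarkov : CondIndep p A C B) :
    risk p ℓ C B ≤ risk p ℓ C A := by
  classical
  have hne : Nonempty (α → 𝒜) := inferInstance
  refine le_ciInf fun ψ => ?_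
  rcases isEmpty_or_nonempty α with hα | hα
  · have hΩ : IsEmpty Ω := Function.isEmpty A
    have : ∀ φ : β → 𝒜, ∑ ω, p ω * ℓ (C ω) (φ (B ω)) = 0 := fun φ => by simp
    rw [risk, show (∑ ω, p ω * ℓ (C ω) (ψ (A ω))) = 0 by simp]
    refine le_of_eq ?_
    simp only [this]
    exact ciInf_const
  · -- marginal distributions
    set J : α → 𝒞 → β → ℝ := fun a c b => distOf p (fun ω => (A ω, C ω, B ω)) (a, c, b) with hJ
    set Pab : α → β → ℝ := fun a b => distOf p (fun ω => (A ω, B ω)) (a, b) with hPab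
    set Pcb : 𝒞 → β → ℝ := fun c b => distOf p (fun ω => (C ω, B ω)) (c, b) with hPcb
    set F : β → 𝒜 → ℝ := fun b u => ∑ c, Pcb c b * ℓ c u with hF
    have hφex : ∀ b : β, ∃ a0 : α, ∀ a : α, F b (ψ a0) ≤ F b (ψ a) := by
      intro b
      obtain ⟨a0, _, h⟩ := Finset.exists_min_image Finset.univ (fun a => F b (ψ a))
        Finset.univ_nonempty
      exact ⟨a0, fun a => h a (Finset.mem_univ a)⟩
    set φ : β → 𝒜 := fun b => ψ (Classical.choose (hφex b)) with hφ
    have hkey : ∀ b a, F b (φ b) ≤ F b (ψ a) := fun b a => Classical.choose_spec (hφex b) a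
    -- rewrite expected losses via the joint distribution
    have hrw : ∀ g : α → 𝒞 → β → ℝ,
        ∑ ω, p ω * g (A ω) (C ω) (B ω) = ∑ b, ∑ a, ∑ c, J a c b * g a c b := by
      intro g
      rw [← sum_distOf_mul' p (fun ω => (A ω, C ω, B ω)) (fun x => g x.1 x.2.1 x.2.2)]
      simp only [Fintype.sum_prod_type]
      exact sum_comm3x (fun a c b => distOf p (fun ω => (A ω, C ω, B ω)) (a, c, b) * g a c b)
    have hstep : ∀ b,
        ∑ a, ∑ c, J a c b * ℓ c (φ b) ≤ ∑ a, ∑ c, J a c b * ℓ c (ψ a) := by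
      intro b
      have hPb0 : 0 ≤ distOf p B b := distOf_nonneg' hp.1 B b
      rcases hPb0.eq_or_lt with hPb | hPb
      · -- P(B = b) = 0, so all joint weights vanish
        have hterm : ∀ ω, (if B ω = b then p ω else 0) = 0 := by
          have := (Finset.sum_eq_zero_iff_of_nonneg
            (fun ω _ => by split <;> simp [hp.1 ω])).mp hPb.symm
          exact fun ω => this ω (Finset.mem_univ ω)
        have hJ0 : ∀ a c, J a c b = 0 := by
          intro a c
          refine Finset.sum_eq_zero fun ω _ => ?_
          split
          · rename_i h
            have hb : B ω = b := by
              have := congrArg (fun x : α × 𝒞 × β => x.2.2) h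
              simpa using this
            have := hterm ω
            rw [if_pos hb] at this
            exact this
          · rfl
        simp [hJ0]
      · -- P(B = b) > 0
        set Pb := distOf p B b
        have hprod : ∀ a c, J a c b * Pb = Pab a b * Pcb c b := fun a c => hMarkov a c b
        have hmargAB : ∑ a, Pab a b = Pb := distOf_marg' p A B b
        have hL : Pb * (∑ a, ∑ c, J a c b * ℓ c (φ b)) = Pb * F b (φ b) := by
          rw [Finset.mul_sum]
          have : ∀ a, Pb * (∑ c, J a c b * ℓ c (φ b)) = Pab a b * F b (φ b) := by
            intro a
            rw [Finset.mul_sum, hF]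
            simp only [Finset.mul_sum]
            refine Finset.sum_congr rfl fun c _ => ?_
            rw [← mul_assoc, mul_comm Pb (J a c b), hprod a c, mul_assoc]
          rw [Finset.sum_congr rfl fun a _ => this a, ← Finset.sum_mul, hmargAB]
        have hR : Pb * (∑ a, ∑ c, J a c b * ℓ c (ψ a)) = ∑ a, Pab a b * F b (ψ a) := by
          rw [Finset.mul_sum]
          refine Finset.sum_congr rfl fun a _ => ?_
          rw [Finset.mul_sum, hF]
          simp only [Finset.mul_sum]
          refine Finset.sum_congr rfl fun c _ => ?_
          rw [← mul_assoc, mul_comm Pb (J a c b), hprod a c, mul_assoc]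
        have hineq : Pb * F b (φ b) ≤ ∑ a, Pab a b * F b (ψ a) := by
          calc Pb * F b (φ b) = ∑ a, Pab a b * F b (φ b) := by
                rw [← Finset.sum_mul, hmargAB]
            _ ≤ ∑ a, Pab a b * F b (ψ a) := by
                refine Finset.sum_le_sum fun a _ => ?_
                exact mul_le_mul_of_nonneg_left (hkey b a) (distOf_nonneg' hp.1 _ _)
        have := hL.le.trans (hineq.trans hR.ge)
        exact le_of_mul_le_mul_left this hPb
    have hmain : ∑ ω, p ω * ℓ (C ω) (φ (B ω)) ≤ ∑ ω, p ω * ℓ (C ω) (ψ (A ω)) := by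
      rw [hrw (fun a c _ => ℓ c (ψ a)), hrw (fun _ c b => ℓ c (φ b))]
      exact Finset.sum_le_sum fun b _ => hstep b
    refine le_trans (ciInf_le ?_ φ) hmain
    exact (Set.finite_range _).bddBelow
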